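/- arXiv:2312.10061 — 2 statements merged into one kernel-verified Lean document; each statement's English description precedes it below -/
import Mathlib

section
/- Let α ≥ 5 be rational and k ≥ 3. Suppose s₁ w̃₁ t₁ and s₂ w̃₂ t₂ are bi-infinite α-power-free words over Σ_k (s₁, s₂ left-infinite, t₁, t₂ right-infinite, w̃₁, w̃₂ finite nonempty), every finite factor of s₂ is a recurrent factor of t₁, the letter x occurs in none of s₁, s₂, t₁, t₂, and x is the first letter of w̃₂. Then there exists a finite prefix w of t₁ such that the bi-infinite word s₁ w̃₁ w w̃₂ t₂ is α-power-free. -/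
/-!
Let `M = max |w̃₁| |w̃₂|`. The length-`M` suffix of `s₂` recurs in `t₁`, so some prefix `w` of `t₁`
ends with it. In `s₁ w̃₁ w w̃₂ t₂` everything left of the position `j` of the marker `x` is read
in `s₁ w̃₁ t₁`, and everything from `j - M` on is read in `s₂ w̃₂ t₂`, so a high power inside
either range is excluded. A power of period `p` reaching across both ranges contains `x` at `j`,
while `x` occurs only inside `w̃₁` and `w̃₂`. Periodicity then puts an `x` at `j - p` inside `w`
when `p ≤ M`, at `j + p` beyond `w̃₂` when the power reaches that far, and otherwise (using the
exponent `≥ 3`) at both `j - p` and `j - 2p`, which would have to lie in `w̃₁` although they are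
more than `|w̃₁|` apart.
-/

open List

/-- The concrete β-power word: `n` full copies of `r` followed by a prefix `t` of `r`. -/
def powWord {A : Type*} (r : List A) (n : ℕ) (t : List A) : List A :=
  (List.replicate n r).flatten ++ t

/-- `p` is a `β`-power `r^β` for some nonempty `r` and rational `β ≥ α`
    (here `β = |p| / |r|`). -/
def IsPowerGE {A : Type*} (α : ℚ) (p : List A) : Prop :=
  ∃ (r t : List A) (n : ℕ), r ≠ [] ∧ t <+: r ∧ p = powWord r n t ∧
    α * (r.length : ℚ) ≤ (p.length : ℚ)

/-- A finite word is `α`-power-free if no factor of it is a `β`-power with `β ≥ α`. -/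
def PowerFree {A : Type*} (α : ℚ) (w : List A) : Prop :=
  ∀ p : List A, p <:+: w → ¬ IsPowerGE α p

/-- The factor of the right-infinite word `t` of length `n` starting at position `i`. -/
def windowR {A : Type*} (t : ℕ → A) (i n : ℕ) : List A :=
  (List.range n).map fun j => t (i + j)

/-- `u` is a finite factor of the right-infinite word `t`. -/
def FactorR {A : Type*} (u : List A) (t : ℕ → A) : Prop :=
  ∃ i, u = windowR t i u.length

/-- `u` is a finite factor of the left-infinite word `s`
    (`s 0` is the last letter, `s 1` the one before it, etc.). -/
def FactorL {A : Type*} (u : List A) (s : ℕ → A) : Prop :=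
  ∃ i, u = ((List.range u.length).map fun j => s (i + j)).reverse

/-- The factor of the bi-infinite word `v` of length `n` starting at position `i`. -/
def windowZ {A : Type*} (v : ℤ → A) (i : ℤ) (n : ℕ) : List A :=
  (List.range n).map fun j => v (i + j)

/-- `p` occurs in the bi-infinite word `v` at position `i`. -/
def occursAtZ {A : Type*} (v : ℤ → A) (p : List A) (i : ℤ) : Prop :=
  p = windowZ v i p.length

/-- `u` is a finite factor of the bi-infinite word `v`. -/
def FactorZ {A : Type*} (u : List A) (v : ℤ → A) : Prop :=
  ∃ i : ℤ, u = windowZ v i u.length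

/-- A right-infinite word is `α`-power-free if no finite factor is a `β`-power, `β ≥ α`. -/
def PowerFreeR {A : Type*} (α : ℚ) (t : ℕ → A) : Prop :=
  ∀ u : List A, FactorR u t → ¬ IsPowerGE α u

/-- A left-infinite word is `α`-power-free if no finite factor is a `β`-power, `β ≥ α`. -/
def PowerFreeL {A : Type*} (α : ℚ) (s : ℕ → A) : Prop :=
  ∀ u : List A, FactorL u s → ¬ IsPowerGE α u

/-- A bi-infinite word is `α`-power-free if no finite factor is a `β`-power, `β ≥ α`. -/
def PowerFreeZ {A : Type*} (α : ℚ) (v : ℤ → A) : Prop :=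
  ∀ u : List A, FactorZ u v → ¬ IsPowerGE α u

/-- `u` is a recurrent factor of the right-infinite word `t`: it occurs at
    arbitrarily large positions. -/
def RecurrentR {A : Type*} (u : List A) (t : ℕ → A) : Prop :=
  ∀ N : ℕ, ∃ i, N ≤ i ∧ u = windowR t i u.length

/-- The bi-infinite word `s·w·t`: the left-infinite word `s` on negative positions,
    the finite word `w` on `[0, |w|)`, and the right-infinite word `t` afterwards. -/
def glue {A : Type*} (s : ℕ → A) (w : List A) (t : ℕ → A) : ℤ → A := fun i =>
  if i < 0 then s ((-i - 1).toNat)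
  else if h : i.toNat < w.length then w[i.toNat] else t (i.toNat - w.length)

/-- The left-infinite word `s·u`. -/
def appendL {A : Type*} (s : ℕ → A) (u : List A) : ℕ → A := fun n =>
  if h : n < u.length then u[u.length - 1 - n]'(by omega) else s (n - u.length)

/-- `w` occurs in the left-infinite word `s` at distance `i` from the right end:
    `w` occupies the positions `i + |w| - 1, …, i + 1, i`. -/
def occursAtL {A : Type*} (s : ℕ → A) (w : List A) (i : ℕ) : Prop :=
  w = ((List.range w.length).map fun j => s (i + j)).reverse

/-- The number of occurrences of `p` as a factor of the finite word `w`. -/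
def occur {A : Type*} [DecidableEq A] (w p : List A) : ℕ :=
  ((List.range (w.length + 1)).filter fun i => decide (p <+: w.drop i)).length

section Words

variable {A : Type*}

lemma powWord_getElem?_add_length {r t : List A} {n q : ℕ} (ht : t <+: r)
    (hq : q + r.length < (powWord r n t).length) :
    (powWord r n t)[q + r.length]? = (powWord r n t)[q]? := by
  obtain ⟨t', ht'⟩ := ht
  set X := (List.replicate n r).flatten with hX
  have hrX : powWord r n t ++ t' = r ++ X := by
    rw [powWord, List.append_assoc, ht', ← List.flatten_concat, ← List.replicate_succ',
      List.replicate_succ, List.flatten_cons]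
  have ht_le : t.length ≤ r.length := by rw [← ht']; simp
  have hqX : q < X.length := by rw [powWord, List.length_append, ← hX] at hq; omega
  calc (powWord r n t)[q + r.length]? = (r ++ X)[q + r.length]? := by
        rw [← hrX, List.getElem?_append_left hq]
    _ = X[q]? := by rw [List.getElem?_append_right (Nat.le_add_left _ _), Nat.add_sub_cancel]
    _ = (powWord r n t)[q]? := by rw [powWord, List.getElem?_append_left hqX]

lemma IsPowerGE.exists_period {α : ℚ} {u : List A} (h : IsPowerGE α u) :
    ∃ p : ℕ, 0 < p ∧ α * p ≤ u.length ∧ ∀ q, q + p < u.length → u[q + p]? = u[q]? := by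
  obtain ⟨r, t, n, hr, ht, rfl, hlen⟩ := h
  exact ⟨r.length, List.length_pos_iff.mpr hr, hlen,
    fun _ hq => powWord_getElem?_add_length ht hq⟩

/- In `windowZ` the index list `List.range n` is elaborated as a `List ℤ` through a monadic
coercion; this restates it as an honest `map`. -/
lemma windowZ_eq_map (v : ℤ → A) (a : ℤ) (n : ℕ) :
    windowZ v a n = (List.range n).map fun q : ℕ => v (a + q) := by
  simp [windowZ, ← List.map_eq_flatMap]

lemma getElem?_of_occursAtZ {v : ℤ → A} {u : List A} {a : ℤ} (hu : occursAtZ v u a) {q : ℕ}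
    (hq : q < u.length) : u[q]? = some (v (a + q)) := by
  rw [hu, windowZ_eq_map, List.getElem?_map, List.getElem?_range (by simpa using hq),
    Option.map_some]

lemma FactorZ.of_occursAtZ {v v' : ℤ → A} {u : List A} {a d : ℤ} (hu : occursAtZ v u a)
    (h : ∀ i, a ≤ i → i < a + u.length → v i = v' (i - d)) : FactorZ u v' := by
  refine ⟨a - d, hu.trans ?_⟩
  rw [windowZ_eq_map, windowZ_eq_map]
  refine List.map_congr_left fun q hq => ?_
  rw [List.mem_range] at hq
  rw [h _ (by omega) (by omega)]
  congr 1
  ring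

def HasPeriodOn (v : ℤ → A) (a : ℤ) (n p : ℕ) : Prop :=
  ∀ b, a ≤ b → b + p < a + n → v (b + p) = v b

lemma IsPowerGE.exists_hasPeriodOn {α : ℚ} {v : ℤ → A} {u : List A} {a : ℤ}
    (h : IsPowerGE α u) (hu : occursAtZ v u a) :
    ∃ p : ℕ, 0 < p ∧ α * p ≤ u.length ∧ HasPeriodOn v a u.length p := by
  obtain ⟨p, hp, hαp, hper⟩ := h.exists_period
  refine ⟨p, hp, hαp, fun b hab hb => ?_⟩
  lift b - a to ℕ using (by omega) with q hq
  have := hper q (by omega)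
  rw [getElem?_of_occursAtZ hu (by omega), getElem?_of_occursAtZ hu (by omega),
    Option.some_inj] at this
  convert this using 2 <;> push_cast <;> omega

theorem false_of_hasPeriodOn_across_marker {v : ℤ → A} {x : A} {a j : ℤ} {n p L M : ℕ}
    (hper : HasPeriodOn v a n p) (hp : 0 < p) (hn : 3 * p ≤ n) (ha : a + M < j) (hj : j < a + n)
    (hx : v j = x) (hocc : ∀ i, v i = x → 0 ≤ i ∧ i < L ∨ j ≤ i ∧ i < j + M)
    (hLM : L ≤ M) (hLj : L + M ≤ j) : False := by
  have hx_left (h : a ≤ j - p) : v (j - p) = x := by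
    rw [← hx, ← hper _ h (by omega), sub_add_cancel]
  rcases le_or_gt p M with hpM | hpM
  · have := hocc _ (hx_left (by omega))
    omega
  rcases lt_or_ge (j + p) (a + n) with hroom | hroom
  · have := hocc _ (hx ▸ hper j (by omega) hroom)
    omega
  · have hx_left₂ : v (j - 2 * p) = x := by
      rw [← hx_left (by omega), ← hper _ (by omega) (by omega)]
      congr 1
      ring
    have := hocc _ (hx_left (by omega))
    have := hocc _ hx_left₂
    omega

theorem powerFreeZ_of_marker {α : ℚ} (hα : 3 ≤ α) {v v₁ v₂ : ℤ → A} {x : A} {j : ℤ} {L M : ℕ}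
    (h₁ : PowerFreeZ α v₁) (h₂ : PowerFreeZ α v₂)
    (hv₁ : ∀ i < j, v i = v₁ i) (hv₂ : ∀ i, j - M ≤ i → v i = v₂ (i - j))
    (hx : v j = x) (hocc : ∀ i, v i = x → 0 ≤ i ∧ i < L ∨ j ≤ i ∧ i < j + M)
    (hLM : L ≤ M) (hLj : L + M ≤ j) : PowerFreeZ α v := by
  rintro u ⟨a, hu⟩ hpow
  by_cases hleft : a + u.length ≤ j
  · refine h₁ u (FactorZ.of_occursAtZ (d := 0) hu fun i _ hi => ?_) hpow
    rw [sub_zero, hv₁ i (by omega)]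
  by_cases hright : j - M ≤ a
  · exact h₂ u (FactorZ.of_occursAtZ hu fun i hi _ => hv₂ i (by omega)) hpow
  obtain ⟨p, hp, hαp, hper⟩ := hpow.exists_hasPeriodOn hu
  have hn : 3 * p ≤ u.length := by
    exact_mod_cast (mul_le_mul_of_nonneg_right hα p.cast_nonneg).trans hαp
  exact false_of_hasPeriodOn_across_marker hper hp hn (by omega) (by omega) hx hocc hLM hLj

end Words

section Glue

variable {A : Type*} {s s' t t' : ℕ → A} {w w' : List A} {i : ℤ}

lemma length_windowR (t : ℕ → A) (i n : ℕ) : (windowR t i n).length = n := by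
  simp [windowR]

lemma windowR_add (t : ℕ → A) (i m n : ℕ) :
    windowR t i (m + n) = windowR t i m ++ windowR t (i + m) n := by
  simp [windowR, List.range_add, add_assoc]

lemma glue_of_neg (h : i < 0) : glue s w t i = s (-i - 1).toNat := if_pos h

lemma glue_of_lt_length (h₀ : 0 ≤ i) (h : i < w.length) :
    glue s w t i = w[i.toNat]'(by omega) := by
  rw [glue, if_neg (by omega), dif_pos (by omega)]

lemma glue_of_length_le (h : (w.length : ℤ) ≤ i) : glue s w t i = t (i.toNat - w.length) := by
  rw [glue, if_neg (by omega), dif_neg (by omega)]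

lemma glue_cons_zero (a : A) : glue s (a :: w) t 0 = a := by
  rw [glue_of_lt_length le_rfl (by simp)]
  rfl

lemma nonneg_of_glue_eq {x : A} (hs : ∀ n, s n ≠ x) (h : glue s w t i = x) : 0 ≤ i := by
  by_contra hi
  exact hs _ (glue_of_neg (not_le.mp hi) ▸ h)

lemma lt_length_of_glue_eq {x : A} (ht : ∀ n, t n ≠ x) (h : glue s w t i = x) :
    i < w.length := by
  by_contra hi
  exact ht _ (glue_of_length_le (not_lt.mp hi) ▸ h)

lemma glue_append :
    glue s (w ++ w') t i = glue (appendL s w) w' t (i - w.length) := by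
  have hlen : ((w ++ w').length : ℤ) = w.length + w'.length := by simp
  rcases lt_or_ge i w.length with hw | hw
  · rw [glue_of_neg (i := i - w.length) (by omega), appendL]
    rcases lt_or_ge i 0 with h | h
    · rw [glue_of_neg h, dif_neg (by omega)]
      congr 1
      omega
    · rw [glue_of_lt_length h (by omega), dif_pos (by omega),
        List.getElem_append_left (by omega)]
      congr 1
      omega
  rcases lt_or_ge i (w ++ w').length with hw' | hw'
  · rw [glue_of_lt_length (by omega) hw', glue_of_lt_length (by omega) (by omega),
      List.getElem_append_right (by omega)]
    congr 1
    omega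
  · rw [glue_of_length_le hw', glue_of_length_le (by omega)]
    congr 1
    simp only [List.length_append]
    omega

lemma glue_congr_left {M : ℕ} (h : ∀ n < M, s n = s' n) (hi : -(M : ℤ) ≤ i) :
    glue s w t i = glue s' w t i := by
  unfold glue
  split_ifs
  · exact h _ (by omega)
  all_goals rfl

lemma appendL_append_reverse {u : List A} {n : ℕ} (hn : n < u.length) :
    appendL s (w ++ u.reverse) n = u[n] := by
  rw [appendL, dif_pos (by simp; omega), List.getElem_append_right (by simp; omega),
    List.getElem_reverse]
  congr 1
  simp
  omega

lemma glue_append_windowR_of_lt {m : ℕ} (hi : i < (w ++ windowR t 0 m).length) :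
    glue s (w ++ windowR t 0 m ++ w') t' i = glue s w t i := by
  rcases lt_or_ge i 0 with h | h
  · rw [glue_of_neg h, glue_of_neg h]
  rw [glue_of_lt_length h (by simp only [List.length_append] at hi ⊢; omega),
    List.getElem_append_left (by omega)]
  rcases lt_or_ge i w.length with hw | hw
  · rw [glue_of_lt_length h hw, List.getElem_append_left (by omega)]
  · rw [glue_of_length_le hw, List.getElem_append_right (by omega)]
    simp [windowR]

lemma glue_append_of_reverse_windowR_suffix {v : List A} {M : ℕ}
    (hv : (windowR s' 0 M).reverse <:+ v) (hi : ((w ++ v).length : ℤ) - M ≤ i) :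
    glue s (w ++ v ++ w') t i = glue s' w' t (i - (w ++ v).length) := by
  obtain ⟨v₀, rfl⟩ := hv
  rw [← List.append_assoc] at hi ⊢
  rw [glue_append]
  refine glue_congr_left (M := M) (fun n hn => ?_) (by omega)
  rw [appendL_append_reverse (by rwa [length_windowR])]
  simp [windowR]

end Glue

theorem glue_powerFreeZ_general {A : Type*} (α : ℚ) (hα : 5 ≤ α)
    (s₁ s₂ t₁ t₂ : ℕ → A) (w₁ w₂ : List A) (x : A)
    (h1 : PowerFreeZ α (glue s₁ w₁ t₁)) (h2 : PowerFreeZ α (glue s₂ w₂ t₂))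
    (hrec : ∀ u : List A, u ≠ [] → FactorL u s₂ → RecurrentR u t₁)
    (hx1 : ∀ n, s₁ n ≠ x)
    (hx3 : ∀ n, t₁ n ≠ x) (hx4 : ∀ n, t₂ n ≠ x)
    (hhead : w₂.head? = some x) :
    ∃ m : ℕ, PowerFreeZ α (glue s₁ (w₁ ++ windowR t₁ 0 m ++ w₂) t₂) := by
  obtain ⟨w₂, rfl⟩ := List.head?_eq_some_iff.mp hhead
  set M := max w₁.length (w₂.length + 1)
  set u := (windowR s₂ 0 M).reverse
  have hu : u.length = M := by simp [u, length_windowR]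
  obtain ⟨i, -, hi⟩ := hrec u (List.ne_nil_of_length_pos (by omega)) ⟨0, by rw [hu]; rfl⟩ 0
  have hW : u <:+ windowR t₁ 0 (i + M) := by
    rw [windowR_add, zero_add, hi, hu]
    exact List.suffix_append _ _
  refine ⟨i + M, ?_⟩
  set j : ℤ := ↑(w₁ ++ windowR t₁ 0 (i + M)).length
  have hj : j = w₁.length + (i + M) := by simp [j, length_windowR]
  have hv₁ (k : ℤ) (hk : k < j) :=
    glue_append_windowR_of_lt (s := s₁) (w' := x :: w₂) (t' := t₂) hk
  have hv₂ (k : ℤ) (hk : j - M ≤ k) :=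
    glue_append_of_reverse_windowR_suffix (s := s₁) (w' := x :: w₂) (t := t₂) hW hk
  refine powerFreeZ_of_marker (x := x) (L := w₁.length) (by linarith) h1 h2 hv₁ hv₂ ?_ ?_
    (le_max_left _ _) (by omega)
  · rw [hv₂ j (by omega), sub_self, glue_cons_zero]
  · intro k hk
    rcases lt_or_ge k j with hkj | hkj
    · rw [hv₁ k hkj] at hk
      exact Or.inl ⟨nonneg_of_glue_eq hx1 hk, lt_length_of_glue_eq hx3 hk⟩
    · rw [hv₂ k (by omega)] at hk
      have := lt_length_of_glue_eq hx4 hk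
      simp only [List.length_cons] at this
      omega

/-- Proposition 2 of the paper: gluing two bi-infinite α-power-free words
    `s₁·w̃₁·t₁` and `s₂·w̃₂·t₂` along a prefix of `t₁`, assuming every finite factor of
    `s₂` is recurrent in `t₁`, the letter `x` occurs in none of `s₁, s₂, t₁, t₂`, and
    `x` is the first letter of `w̃₂`. -/
theorem glue_powerFreeZ {A : Type*} [Fintype A] {k : ℕ} (hk : 3 ≤ k)
    (hcard : Fintype.card A = k) (α : ℚ) (hα : 5 ≤ α)
    (s₁ s₂ t₁ t₂ : ℕ → A) (w₁ w₂ : List A) (x : A)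
    (hw₁ : w₁ ≠ []) (hw₂ : w₂ ≠ [])
    (h1 : PowerFreeZ α (glue s₁ w₁ t₁)) (h2 : PowerFreeZ α (glue s₂ w₂ t₂))
    (hrec : ∀ u : List A, u ≠ [] → FactorL u s₂ → RecurrentR u t₁)
    (hx1 : ∀ n, s₁ n ≠ x) (hx2 : ∀ n, s₂ n ≠ x)
    (hx3 : ∀ n, t₁ n ≠ x) (hx4 : ∀ n, t₂ n ≠ x)
    (hhead : w₂.head? = some x) :
    ∃ m : ℕ, PowerFreeZ α (glue s₁ (w₁ ++ windowR t₁ 0 m ++ w₂) t₂) :=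
  glue_powerFreeZ_general α hα s₁ s₂ t₁ t₂ w₁ w₂ x h1 h2 hrec hx1 hx3 hx4 hhead
end

section
/- Let α ≥ 5 be rational and k ≥ 3. Let v₁ and v₂ be bi-infinite α-power-free words over Σ_k with disjoint sets of nonempty finite factors, let w₃ be a nonempty factor of v₁ and w₄ a nonempty factor of v₂. Writing v₁ = v₁₁v₁₂ with w₃ a factor of v₁₁ and v₂ = v₂₁v₂₂ with w₄ a factor of v₂₂, the bi-infinite word v₁₁·v₂₂ is α-power-free. -/
open List

section Helpers
variable {A : Type*}

lemma windowZ_eq (v : ℤ → A) (i : ℤ) (n : ℕ) :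
    windowZ v i n = (List.range n).map (fun j : ℕ => v (i + (j : ℤ))) := by
  unfold windowZ
  simp only [bind_pure_comp, Functor.map, List.map_map]
  rfl

lemma windowZ_length (v : ℤ → A) (i : ℤ) (n : ℕ) :
    (windowZ v i n).length = n := by
  rw [windowZ_eq, List.length_map, List.length_range]

lemma windowZ_getElem (v : ℤ → A) (i : ℤ) (n j : ℕ) (h : j < n) :
    (windowZ v i n)[j]'(by simpa [windowZ_length] using h) = v (i + (j : ℤ)) := by
  have h' : j < ((List.range n).map (fun j : ℕ => v (i + (j : ℤ)))).length := by
    rw [List.length_map, List.length_range]; exact h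
  rw [List.getElem_of_eq (windowZ_eq v i n) _, List.getElem_map, List.getElem_range]

lemma windowZ_congr {v w : ℤ → A} {s : ℤ} {m : ℕ}
    (h : ∀ j : ℕ, j < m → v (s + (j : ℤ)) = w (s + (j : ℤ))) :
    windowZ v s m = windowZ w s m := by
  rw [windowZ_eq, windowZ_eq]
  apply List.map_congr_left
  intro a ha
  exact h a (List.mem_range.mp ha)

lemma powWord_succ (r t : List A) (n : ℕ) :
    powWord r (n + 1) t = r ++ powWord r n t := by
  simp [powWord, List.replicate_succ]

lemma getElem_powWord {r t : List A} (ht : t <+: r) (hp : 0 < r.length) :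
    ∀ (n j : ℕ) (h : j < (powWord r n t).length),
      (powWord r n t)[j] = r[j % r.length]'(Nat.mod_lt j hp) := by
  intro n
  induction n with
  | zero =>
    intro j h
    have h0 : powWord r 0 t = t := by simp [powWord]
    have hjt : j < t.length := by
      have := h; rw [h0] at this; exact this
    rw [List.getElem_of_eq h0 h]
    have hjr : j < r.length := lt_of_lt_of_le hjt ht.length_le
    have hmod : j % r.length = j := Nat.mod_eq_of_lt hjr
    calc t[j]'hjt = r[j]'hjr := ht.getElem hjt
      _ = r[j % r.length]'(Nat.mod_lt j hp) := by congr 1; omega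
  | succ n ih =>
    intro j h
    have hs : powWord r (n + 1) t = r ++ powWord r n t := powWord_succ r t n
    have hlen : (powWord r (n + 1) t).length = r.length + (powWord r n t).length := by
      rw [hs]; exact List.length_append
    rw [List.getElem_of_eq hs h]
    rcases Nat.lt_or_ge j r.length with hj | hj
    · rw [List.getElem_append_left hj]
      congr 1
      exact (Nat.mod_eq_of_lt hj).symm
    · rw [List.getElem_append_right hj]
      rw [ih (j - r.length) (by omega)]
      congr 1
      have hjeq : j = r.length + (j - r.length) := by omega
      conv_rhs => rw [hjeq]
      rw [Nat.add_mod_left]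

lemma powWord_period {r t : List A} (ht : t <+: r) (hp : 0 < r.length)
    (n j : ℕ) (h : j + r.length < (powWord r n t).length) :
    (powWord r n t)[j]'(by omega) = (powWord r n t)[j + r.length]'h := by
  rw [getElem_powWord ht hp n j (by omega), getElem_powWord ht hp n (j + r.length) h]
  congr 1
  rw [Nat.add_mod_right]

end Helpers

/-- If `v₁ = v₁₁·v₁₂` and `v₂ = v₂₁·v₂₂` are bi-infinite α-power-free words with no
    common nonempty finite factor, `w₃` a nonempty factor of `v₁₁` and `w₄` a nonempty
    factor of `v₂₂`, then the bi-infinite word `v₁₁·v₂₂` is α-power-free. -/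
theorem powerFreeZ_of_disjoint_factors {A : Type*} [Fintype A] {k : ℕ} (hk : 3 ≤ k)
    (hcard : Fintype.card A = k) (α : ℚ) (hα : 5 ≤ α)
    (v₁ v₂ : ℤ → A) (h1 : PowerFreeZ α v₁) (h2 : PowerFreeZ α v₂)
    (hdisj : ∀ u : List A, u ≠ [] → FactorZ u v₁ → ¬ FactorZ u v₂)
    (v₁₁ v₁₂ v₂₁ v₂₂ : ℕ → A)
    (hv1 : v₁ = glue v₁₁ [] v₁₂) (hv2 : v₂ = glue v₂₁ [] v₂₂)
    (w₃ w₄ : List A) (hw₃ : w₃ ≠ []) (hw₄ : w₄ ≠ [])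
    (h3 : FactorL w₃ v₁₁) (h4 : FactorR w₄ v₂₂) :
    PowerFreeZ α (glue v₁₁ [] v₂₂) := by
  intro u hu hpow
  obtain ⟨i, hu⟩ := hu
  obtain ⟨r, t, n', hr, ht, hu', hαr⟩ := hpow
  set v' : ℤ → A := glue v₁₁ [] v₂₂ with hv'
  set L := u.length with hL
  set p := r.length with hp
  have hp1 : 1 ≤ p := List.length_pos_iff.mpr hr
  have hLp : 2 * p ≤ L := by
    have h5 : (5 : ℚ) * (p : ℚ) ≤ (L : ℚ) :=
      le_trans (by have : (0:ℚ) ≤ (p:ℚ) := by positivity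
                   nlinarith) hαr
    have : (2 : ℚ) * (p : ℚ) ≤ (L : ℚ) := by
      have hp0 : (1:ℚ) ≤ (p:ℚ) := by exact_mod_cast hp1
      nlinarith
    exact_mod_cast this
  have hv'1 : ∀ j : ℤ, j < 0 → v' j = v₁ j := by
    intro j hj
    rw [hv1]
    simp [v', glue, hj]
  have hv'2 : ∀ j : ℤ, 0 ≤ j → v' j = v₂ j := by
    intro j hj
    rw [hv2]
    simp [v', glue, not_lt.mpr hj]
  have hget : ∀ (j : ℕ) (hj : j < L), u[j]'hj = v' (i + (j : ℤ)) := by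
    intro j hj
    rw [List.getElem_of_eq hu hj]
    exact windowZ_getElem v' i L j hj
  have hper : ∀ j : ℕ, j + p < L → v' (i + (j : ℤ)) = v' (i + ((j + p : ℕ) : ℤ)) := by
    intro j hj
    have hlenpw : (powWord r n' t).length = L := by rw [← hu']
    have hpw := powWord_period ht hp1 n' j (by rw [hlenpw]; exact hj)
    have e1 := hget j (by omega)
    have e2 := hget (j + p) hj
    have e1' : (powWord r n' t)[j]'(by omega) = v' (i + (j : ℤ)) :=
      (List.getElem_of_eq hu' (by omega)).symm.trans e1
    have e2' : (powWord r n' t)[j + p]'(by omega) = v' (i + ((j + p : ℕ) : ℤ)) :=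
      (List.getElem_of_eq hu' (by omega)).symm.trans e2
    rw [← e1', ← e2']
    exact hpw
  have hpow' : IsPowerGE α u := ⟨r, t, n', hr, ht, hu', hαr⟩
  rcases lt_or_ge i 0 with hi | hi
  · rcases le_or_gt (i + L) 0 with hiL | hiL
    · -- entirely inside v₁
      refine h1 u ⟨i, ?_⟩ hpow'
      rw [hu, windowZ_length]
      exact windowZ_congr fun j hj => hv'1 (i + (j : ℤ)) (by omega)
    · -- straddles position 0
      set c : ℕ := (-i).toNat with hc
      have hcz : (c : ℤ) = -i := Int.toNat_of_nonneg (by omega)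
      have hc1 : 1 ≤ c := by omega
      have hcL : c < L := by omega
      set s₂ := max c p with hs₂
      set s₁ := s₂ - p with hs₁
      set m := min (min c p) (L - s₂) with hm
      have hm1 : 1 ≤ m := by omega
      have hs1c : s₁ + m ≤ c := by omega
      have hs2c : c ≤ s₂ := by omega
      have hs2m : s₂ + m ≤ L := by omega
      have hs12 : s₂ = s₁ + p := by omega
      set z := windowZ v' (i + (s₁ : ℤ)) m with hz
      have hzlen : z.length = m := windowZ_length _ _ _
      have hzne : z ≠ [] := by
        intro h0
        rw [h0] at hzlen
        simp at hzlen
        omega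
      have hz1 : FactorZ z v₁ := by
        refine ⟨i + (s₁ : ℤ), ?_⟩
        rw [hzlen, hz]
        exact windowZ_congr fun j hj => hv'1 _ (by omega)
      have hshift : z = windowZ v' (i + (s₂ : ℤ)) m := by
        rw [hz, windowZ_eq, windowZ_eq]
        apply List.map_congr_left
        intro j hj
        have hj' : j < m := List.mem_range.mp hj
        have hstep := hper (s₁ + j) (by omega)
        calc v' (i + (s₁ : ℤ) + (j : ℤ)) = v' (i + ((s₁ + j : ℕ) : ℤ)) := by
              congr 1; push_cast; ring
          _ = v' (i + ((s₁ + j + p : ℕ) : ℤ)) := hstep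
          _ = v' (i + (s₂ : ℤ) + (j : ℤ)) := by congr 1; push_cast; omega
      have hz2 : FactorZ z v₂ := by
        refine ⟨i + (s₂ : ℤ), ?_⟩
        rw [hzlen, hshift]
        exact windowZ_congr fun j hj => hv'2 _ (by omega)
      exact hdisj z hzne hz1 hz2
  · -- entirely inside v₂
    refine h2 u ⟨i, ?_⟩ hpow'
    rw [hu, windowZ_length]
    exact windowZ_congr fun j hj => hv'2 (i + (j : ℤ)) (by omega)
end
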